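/- In W(q), let a₁, a₂, a₃ be pairwise skew lines of W(q) spanning a hyperbolic quadric H of PG(3,q), and let a₄ be a line of W(q) disjoint from H. Then the set of all points of a₁ ∪ a₂ ∪ a₃ ∪ a₄ (of size 4q + 4) resolves all points of W(q): any two distinct points of W(q) have distinct distance vectors to this set in the incidence graph. -/

import Mathlib

/-!
A point `C` lying on one of the lines `aᵢ` is singled out by its distance `0`. Otherwise each
`aᵢ` carries a point `Xᵢ` collinear with `C`, at distance `2` from it; a point `C'` with the same
distance vector is collinear with every `Xᵢ` too, so all `xᵢ = Xᵢ.rep` lie in `C^π ∩ C'^π`. For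
`C ≠ C'` this is a projective line, spanned by `x₁, x₂` since `a₁, a₂` are skew. Skewness also
makes `x₃` differ from `x₁` and `x₂`, so this line meets the quadric `H` in three points and lies
on it; but it contains `x₄ ∈ a₄`, which misses `H`.
-/

open Set

/-- The bipartite point-line incidence graph of an incidence relation `I`. -/
def IncGraph {Pt Ln : Type*} (I : Pt → Ln → Prop) : SimpleGraph (Pt ⊕ Ln) where
  Adj x y := (∃ p l, x = Sum.inl p ∧ y = Sum.inr l ∧ I p l) ∨
             (∃ p l, x = Sum.inr l ∧ y = Sum.inl p ∧ I p l)
  symm := by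
    constructor
    rintro x y (⟨p, l, hx, hy, h⟩ | ⟨p, l, hx, hy, h⟩)
    · exact Or.inr ⟨p, l, hy, hx, h⟩
    · exact Or.inl ⟨p, l, hy, hx, h⟩
  loopless := by
    constructor
    rintro x (⟨p, l, hx, hy, h⟩ | ⟨p, l, hx, hy, h⟩) <;> subst hx <;> simp_all

/-- A set of vertices is a resolving set if every vertex is determined
by its distances to the elements of `S`. -/
def IsResolvingSet {V : Type*} (G : SimpleGraph V) (S : Set V) : Prop :=
  ∀ x y : V, (∀ s ∈ S, G.dist x s = G.dist y s) → x = y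

noncomputable section

/-- The standard symplectic (alternating, nondegenerate) form on `F_q⁴`, defining the
null polarity whose self-conjugate lines are the lines of `W(q)`. -/
def symp {p n : ℕ} [Fact p.Prime] (x y : Fin 4 → GaloisField p n) : GaloisField p n :=
  x 0 * y 1 - x 1 * y 0 + x 2 * y 3 - x 3 * y 2

/-- Points of `W(q)`: all points of `PG(3,q)`, `q = p^n`. -/
abbrev WPoint (p n : ℕ) [Fact p.Prime] :=
  Projectivization (GaloisField p n) (Fin 4 → GaloisField p n)

/-- Lines of `W(q)`: the totally isotropic (self-conjugate) projective lines, i.e. the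
`2`-dimensional subspaces on which the symplectic form vanishes. -/
def WLine (p n : ℕ) [Fact p.Prime] :=
  {W : Submodule (GaloisField p n) (Fin 4 → GaloisField p n) //
    Module.finrank (GaloisField p n) W = 2 ∧ ∀ x ∈ W, ∀ y ∈ W, symp x y = 0}

/-- Incidence in `W(q)`. -/
def wIncid {p n : ℕ} [Fact p.Prime] (P : WPoint p n) (l : WLine p n) : Prop :=
  P.rep ∈ l.1

open scoped LinearAlgebra.Projectivization
open Module Submodule

theorem SimpleGraph.dist_eq_two_iff {V : Type*} {G : SimpleGraph V} {u v : V} :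
    G.dist u v = 2 ↔ u ≠ v ∧ ¬ G.Adj u v ∧ (G.commonNeighbors u v).Nonempty := by
  rw [SimpleGraph.dist, ENat.toNat_eq_iff two_ne_zero]
  exact SimpleGraph.edist_eq_two_iff

namespace IncGraph

variable {Pt Ln : Type*} {I : Pt → Ln → Prop} {P P' : Pt} {l : Ln}

theorem adj_inl_inr_iff : (IncGraph I).Adj (.inl P) (.inr l) ↔ I P l := by
  simp [IncGraph]

theorem adj_inr_inl_iff : (IncGraph I).Adj (.inr l) (.inl P) ↔ I P l := by
  simp [IncGraph]

theorem not_adj_inl_inl : ¬ (IncGraph I).Adj (.inl P) (.inl P') := by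
  simp [IncGraph]

theorem reachable_of_incid (hP : I P l) (hP' : I P' l) :
    (IncGraph I).Reachable (.inl P) (.inl P') :=
  (adj_inl_inr_iff.2 hP).reachable.trans (adj_inr_inl_iff.2 hP').reachable

theorem dist_inl_inl_eq_two_iff :
    (IncGraph I).dist (.inl P) (.inl P') = 2 ↔ P ≠ P' ∧ ∃ l, I P l ∧ I P' l := by
  simp [SimpleGraph.dist_eq_two_iff, not_adj_inl_inl, Set.Nonempty,
    SimpleGraph.mem_commonNeighbors, adj_inl_inr_iff]

end IncGraph

section LinearAlgebra

variable {K V : Type*} [Field K] [AddCommGroup V] [Module K V]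

theorem LinearIndependent.pair_of_notMem {W : Submodule K V} {x y : V} (hx : x ∈ W)
    (hx0 : x ≠ 0) (hy : y ∉ W) : LinearIndependent K ![x, y] :=
  (LinearIndependent.pair_iff' hx0).2 fun a hxy => hy (hxy ▸ W.smul_mem a hx)

theorem LinearIndependent.finrank_span_pair {x y : V} (h : LinearIndependent K ![x, y]) :
    finrank K (span K {x, y}) = 2 := by
  rw [← Matrix.range_cons_cons_empty x y ![], finrank_span_eq_card h, Fintype.card_fin]

theorem Submodule.exists_mem_ne_zero_apply_eq_zero {W : Submodule K V} [FiniteDimensional K W]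
    (hW : 1 < finrank K W) (f : V →ₗ[K] K) : ∃ x ∈ W, x ≠ 0 ∧ f x = 0 := by
  obtain ⟨⟨x, hxW⟩, hx, hx0⟩ := exists_mem_ne_zero_of_ne_bot
    (LinearMap.ker_ne_bot_of_finrank_lt (f := f.domRestrict W) (by rwa [finrank_self]))
  exact ⟨x, hxW, by simpa using hx0, hx⟩

theorem Submodule.ne_zero_and_ne_zero_of_smul_add_smul_mem {W₁ W₂ W : Submodule K V}
    (h₁ : Disjoint W₁ W) (h₂ : Disjoint W₂ W) {x y : V} {a b : K} (hx : x ∈ W₁) (hy : y ∈ W₂)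
    (hW : a • x + b • y ∈ W) (h0 : a • x + b • y ≠ 0) : a ≠ 0 ∧ b ≠ 0 := by
  constructor <;> rintro rfl
  · rw [zero_smul, zero_add] at hW h0
    exact h0 (disjoint_def.1 h₂ _ (W₂.smul_mem b hy) hW)
  · rw [zero_smul, add_zero] at hW h0
    exact h0 (disjoint_def.1 h₁ _ (W₁.smul_mem a hx) hW)

theorem LinearMap.BilinForm.mem_orthogonal_span_pair_iff {B : LinearMap.BilinForm K V}
    {c c' v : V} : v ∈ B.orthogonal (span K {c, c'}) ↔ B c v = 0 ∧ B c' v = 0 := by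
  refine ⟨fun h => ⟨h c (subset_span (by simp)), h c' (subset_span (by simp))⟩, ?_⟩
  rintro ⟨h, h'⟩ w hw
  obtain ⟨a, b, rfl⟩ := mem_span_pair.1 hw
  simp [h, h']

/-- In dimension `≤ 4` the orthogonal of a plane has dimension at most `2`. -/
theorem LinearMap.BilinForm.Nondegenerate.mem_span_pair_of_mem_orthogonal
    [FiniteDimensional K V] {B : LinearMap.BilinForm K V} (hB : B.Nondegenerate)
    (hV : finrank K V ≤ 4) {c c' x y z : V} (hc : LinearIndependent K ![c, c'])
    (hxy : LinearIndependent K ![x, y]) (hx : x ∈ B.orthogonal (span K {c, c'}))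
    (hy : y ∈ B.orthogonal (span K {c, c'})) (hz : z ∈ B.orthogonal (span K {c, c'})) :
    z ∈ span K {x, y} := by
  have hplane : span K {x, y} = B.orthogonal (span K {c, c'}) := by
    refine eq_of_le_of_finrank_le (span_le.2 (Set.pair_subset hx hy)) ?_
    rw [finrank_orthogonal hB, hc.finrank_span_pair, hxy.finrank_span_pair]
    omega
  exact hplane ▸ hz

theorem Projectivization.linearIndependent_rep_pair {u v : ℙ K V} (h : u ≠ v) :
    LinearIndependent K ![u.rep, v.rep] := by
  convert independent_iff.1 ((independent_pair_iff_ne u v).2 h) using 1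
  ext i
  fin_cases i <;> rfl

theorem Projectivization.rep_mk_mem_iff {W : Submodule K V} {v : V} (hv : v ≠ 0) :
    (mk K v hv).rep ∈ W ↔ v ∈ W := by
  obtain ⟨a, ha⟩ := exists_smul_eq_mk_rep K v hv
  rw [← ha, smul_mem_iff']

theorem Projectivization.ncard_setOf_rep_mem (W : Submodule K V) :
    {u : ℙ K V | u.rep ∈ W}.ncard = Nat.card (ℙ K W) := by
  have hinj := map_injective (σ := RingHom.id K) W.subtype W.injective_subtype
  rw [← Set.ncard_univ, ← Set.ncard_image_of_injective _ hinj, Set.image_univ]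
  congr 1
  ext u
  induction u with | h v hv => ?_
  rw [Set.mem_ofPred, rep_mk_mem_iff]
  constructor
  · intro hvW
    exact ⟨mk K ⟨v, hvW⟩ (by simpa using hv), rfl⟩
  · rintro ⟨w, hw⟩
    induction w with | h w hw0 => ?_
    obtain ⟨a, ha⟩ := (mk_eq_mk_iff _ _ _ _ _).1 hw
    rw [← smul_mem_iff' W a, ha]
    exact w.2

theorem QuadraticMap.map_smul_add_smul {R M : Type*} [CommRing R] [AddCommGroup M]
    [Module R M] (Q : QuadraticMap R M R) (a b : R) (x y : M) :
    Q (a • x + b • y) = a * a * Q x + b * b * Q y + a * b * polar Q x y := by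
  rw [QuadraticMap.map_add Q, QuadraticMap.map_smul, QuadraticMap.map_smul, polar_smul_left,
    polar_smul_right]
  simp only [smul_eq_mul]
  ring

/-- A projective line meeting a quadric in three points lies on it. -/
theorem QuadraticMap.eq_zero_of_mem_span_pair {Q : QuadraticMap K V K} {x y w : V} {a b : K}
    (ha : a ≠ 0) (hb : b ≠ 0) (hx : Q x = 0) (hy : Q y = 0) (hab : Q (a • x + b • y) = 0)
    (hw : w ∈ span K {x, y}) : Q w = 0 := by
  have hpolar : polar Q x y = 0 := by
    rw [Q.map_smul_add_smul, hx, hy] at hab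
    simpa [ha, hb] using hab
  obtain ⟨c, d, rfl⟩ := mem_span_pair.1 hw
  rw [Q.map_smul_add_smul, hx, hy, hpolar]
  ring

theorem exists_quadraticForm_eq_of_linearEquiv {R : Type*} [CommRing R] {Q : (Fin 4 → R) → R}
    (h : ∃ e : (Fin 4 → R) ≃ₗ[R] (Fin 4 → R), ∀ v, Q v = e v 0 * e v 1 + e v 2 * e v 3) :
    ∃ Q' : QuadraticForm R (Fin 4 → R), ⇑Q' = Q := by
  obtain ⟨e, he⟩ := h
  refine ⟨(QuadraticMap.proj (0 : Fin 4) 1 + QuadraticMap.proj 2 3).comp e.toLinearMap,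
    funext fun v => ?_⟩
  simp [he]

end LinearAlgebra

section Symplectic

def sympForm (R : Type*) [CommRing R] : LinearMap.BilinForm R (Fin 4 → R) :=
  LinearMap.mk₂ R (fun x y => x 0 * y 1 - x 1 * y 0 + x 2 * y 3 - x 3 * y 2)
    (fun _ _ _ => by simp only [Pi.add_apply]; ring)
    (fun _ _ _ => by simp only [Pi.smul_apply, smul_eq_mul]; ring)
    (fun _ _ _ => by simp only [Pi.add_apply]; ring)
    (fun _ _ _ => by simp only [Pi.smul_apply, smul_eq_mul]; ring)

variable {R : Type*} [CommRing R]

theorem sympForm_apply (x y : Fin 4 → R) :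
    sympForm R x y = x 0 * y 1 - x 1 * y 0 + x 2 * y 3 - x 3 * y 2 :=
  rfl

theorem sympForm_smul_add_smul (a b a' b' : R) (x y : Fin 4 → R) :
    sympForm R (a • x + b • y) (a' • x + b' • y) = (a * b' - b * a') * sympForm R x y := by
  simp only [sympForm_apply, Pi.add_apply, Pi.smul_apply, smul_eq_mul]
  ring

theorem sympForm_nondegenerate [Nontrivial R] : (sympForm R).Nondegenerate := by
  refine ⟨fun x h => ?_, fun x h => ?_⟩ <;>
  · have h0 := h (Pi.single 0 1)
    have h1 := h (Pi.single 1 1)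
    have h2 := h (Pi.single 2 1)
    have h3 := h (Pi.single 3 1)
    clear h
    funext i
    fin_cases i <;> simp_all [sympForm_apply]

end Symplectic

section WQuadrangle

variable {p n : ℕ} [Fact p.Prime]

theorem symp_eq_sympForm (x y : Fin 4 → GaloisField p n) :
    symp x y = sympForm (GaloisField p n) x y :=
  rfl

namespace WLine

theorem exists_mem_mem_of_symp_eq_zero {x y : Fin 4 → GaloisField p n}
    (hxy : LinearIndependent (GaloisField p n) ![x, y]) (h : symp x y = 0) :
    ∃ l : WLine p n, x ∈ l.1 ∧ y ∈ l.1 := by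
  refine ⟨⟨span _ {x, y}, hxy.finrank_span_pair, fun u hu v hv => ?_⟩,
    subset_span (by simp), subset_span (by simp)⟩
  obtain ⟨a, b, rfl⟩ := mem_span_pair.1 hu
  obtain ⟨a', b', rfl⟩ := mem_span_pair.1 hv
  rw [symp_eq_sympForm, sympForm_smul_add_smul, ← symp_eq_sympForm, h, mul_zero]

theorem exists_mem {x : Fin 4 → GaloisField p n} (hx : x ≠ 0) : ∃ l : WLine p n, x ∈ l.1 := by
  set B := sympForm (GaloisField p n)
  have hperp : finrank (GaloisField p n) (B.orthogonal (span _ {x})) = 3 := by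
    rw [LinearMap.BilinForm.finrank_orthogonal sympForm_nondegenerate, finrank_fin_fun,
      finrank_span_singleton hx]
  obtain ⟨y, hy, hyx⟩ := Set.not_subset.1 fun hle : B.orthogonal (span _ {x}) ≤ span _ {x} => by
    have := Submodule.finrank_mono hle
    rw [hperp, finrank_span_singleton hx] at this
    omega
  obtain ⟨l, hxl, -⟩ := exists_mem_mem_of_symp_eq_zero
    (.pair_of_notMem (mem_span_singleton_self x) hx hyx) (hy x (mem_span_singleton_self x))
  exact ⟨l, hxl⟩

end WLine

theorem exists_wIncid_collinear (C : WPoint p n) (l : WLine p n) :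
    ∃ X, wIncid X l ∧ ∃ m, wIncid C m ∧ wIncid X m := by
  by_cases hC : wIncid C l
  · exact ⟨C, hC, l, hC, hC⟩
  obtain ⟨x, hxl, hx0, hCx⟩ :=
    exists_mem_ne_zero_apply_eq_zero (by rw [l.2.1]; norm_num) (sympForm _ C.rep)
  obtain ⟨m, hCm, hxm⟩ := WLine.exists_mem_mem_of_symp_eq_zero
    (LinearIndependent.pair_symm_iff.1 (.pair_of_notMem hxl hx0 hC)) hCx
  exact ⟨.mk _ x hx0, (Projectivization.rep_mk_mem_iff hx0).2 hxl, m, hCm,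
    (Projectivization.rep_mk_mem_iff hx0).2 hxm⟩

theorem reachable_inl_inl (C A : WPoint p n) :
    (IncGraph (wIncid (p := p) (n := n))).Reachable (.inl C) (.inl A) := by
  obtain ⟨l, hAl⟩ := WLine.exists_mem A.rep_nonzero
  obtain ⟨X, hXl, m, hCm, hXm⟩ := exists_wIncid_collinear C l
  exact (IncGraph.reachable_of_incid hCm hXm).trans (IncGraph.reachable_of_incid hXl hAl)

/-- The witness is the point of `l` collinear with `C`: it is at distance `2` from `C`, hence
from `C'`. -/
theorem exists_symp_eq_zero_of_dist_eq {C C' : WPoint p n} {l : WLine p n} (hC : ¬ wIncid C l)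
    (h : ∀ A, wIncid A l → (IncGraph (wIncid (p := p) (n := n))).dist (.inl C) (.inl A) =
      (IncGraph (wIncid (p := p) (n := n))).dist (.inl C') (.inl A)) :
    ∃ x ∈ l.1, x ≠ 0 ∧ symp C.rep x = 0 ∧ symp C'.rep x = 0 := by
  obtain ⟨X, hXl, m, hCm, hXm⟩ := exists_wIncid_collinear C l
  have hCX : (IncGraph wIncid).dist (.inl C) (.inl X) = 2 :=
    IncGraph.dist_inl_inl_eq_two_iff.2 ⟨fun hCX => hC (hCX ▸ hXl), m, hCm, hXm⟩
  obtain ⟨-, m', hC'm', hXm'⟩ := IncGraph.dist_inl_inl_eq_two_iff.1 ((h X hXl).symm.trans hCX)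
  exact ⟨X.rep, hXl, X.rep_nonzero, m.2.2 _ hCm _ hXm, m'.2.2 _ hC'm' _ hXm'⟩

theorem mem_span_pair_of_symp_eq_zero {C C' : WPoint p n} (hne : C ≠ C')
    {x y z : Fin 4 → GaloisField p n} (hxy : LinearIndependent (GaloisField p n) ![x, y])
    (hx : symp C.rep x = 0 ∧ symp C'.rep x = 0) (hy : symp C.rep y = 0 ∧ symp C'.rep y = 0)
    (hz : symp C.rep z = 0 ∧ symp C'.rep z = 0) : z ∈ span (GaloisField p n) {x, y} :=
  sympForm_nondegenerate.mem_span_pair_of_mem_orthogonal (by simp)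
    (Projectivization.linearIndependent_rep_pair hne) hxy
    (LinearMap.BilinForm.mem_orthogonal_span_pair_iff.2 hx)
    (LinearMap.BilinForm.mem_orthogonal_span_pair_iff.2 hy)
    (LinearMap.BilinForm.mem_orthogonal_span_pair_iff.2 hz)

theorem ncard_setOf_wIncid (hn : 0 < n) (l : WLine p n) :
    {X : WPoint p n | wIncid X l}.ncard = p ^ n + 1 := by
  rw [show {X : WPoint p n | wIncid X l} = {u | u.rep ∈ l.1} from rfl,
    Projectivization.ncard_setOf_rep_mem, Projectivization.card_of_finrank_two _ _ l.2.1,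
    GaloisField.card p n hn.ne']

theorem disjoint_setOf_wIncid {a b : WLine p n} (h : Disjoint a.1 b.1) :
    Disjoint {X : WPoint p n | wIncid X a} {X | wIncid X b} :=
  Set.disjoint_left.2 fun X ha hb => X.rep_nonzero (disjoint_def.1 h _ ha hb)

theorem ncard_setOf_wIncid_or (hn : 0 < n) {a₁ a₂ a₃ a₄ : WLine p n}
    (h12 : Disjoint a₁.1 a₂.1) (h13 : Disjoint a₁.1 a₃.1) (h14 : Disjoint a₁.1 a₄.1)
    (h23 : Disjoint a₂.1 a₃.1) (h24 : Disjoint a₂.1 a₄.1) (h34 : Disjoint a₃.1 a₄.1) :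
    {X : WPoint p n | wIncid X a₁ ∨ wIncid X a₂ ∨ wIncid X a₃ ∨ wIncid X a₄}.ncard
      = 4 * p ^ n + 4 := by
  simp only [Set.ofPred_or]
  rw [Set.ncard_union_eq, Set.ncard_union_eq, Set.ncard_union_eq, ncard_setOf_wIncid hn,
    ncard_setOf_wIncid hn, ncard_setOf_wIncid hn, ncard_setOf_wIncid hn]
  · ring
  · exact disjoint_setOf_wIncid h34
  · exact Set.disjoint_union_right.2 ⟨disjoint_setOf_wIncid h23, disjoint_setOf_wIncid h24⟩
  · exact Set.disjoint_union_right.2 ⟨disjoint_setOf_wIncid h12,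
      Set.disjoint_union_right.2 ⟨disjoint_setOf_wIncid h13, disjoint_setOf_wIncid h14⟩⟩

end WQuadrangle

/-- Let `a₁, a₂, a₃` be pairwise skew lines of `W(q)` contained in a hyperbolic quadric
`H` of `PG(3,q)` (given by a quadratic form `Q` equivalent to `x₀x₁ + x₂x₃`), and let
`a₄` be a line of `W(q)` disjoint from `H`. Then the `4q + 4` points of
`a₁ ∪ a₂ ∪ a₃ ∪ a₄` resolve all points of `W(q)`: any two points of `W(q)` with equal
distance vectors to this point set (in the incidence graph) coincide. -/
theorem wq_point_semiresolving (p n : ℕ) [Fact p.Prime] (hn : 0 < n)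
    (a₁ a₂ a₃ a₄ : WLine p n)
    (h12 : a₁.1 ⊓ a₂.1 = ⊥) (h13 : a₁.1 ⊓ a₃.1 = ⊥) (h23 : a₂.1 ⊓ a₃.1 = ⊥)
    (Q : (Fin 4 → GaloisField p n) → GaloisField p n)
    (hQhyp : ∃ e : (Fin 4 → GaloisField p n) ≃ₗ[GaloisField p n] (Fin 4 → GaloisField p n),
      ∀ v, Q v = e v 0 * e v 1 + e v 2 * e v 3)
    (hQ1 : ∀ v ∈ a₁.1, Q v = 0) (hQ2 : ∀ v ∈ a₂.1, Q v = 0) (hQ3 : ∀ v ∈ a₃.1, Q v = 0)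
    (hQ4 : ∀ v ∈ a₄.1, v ≠ 0 → Q v ≠ 0) :
    ({x : WPoint p n | wIncid x a₁ ∨ wIncid x a₂ ∨ wIncid x a₃ ∨ wIncid x a₄}.ncard
        = 4 * p ^ n + 4) ∧
    ∀ C C' : WPoint p n,
      (∀ A ∈ {x : WPoint p n | wIncid x a₁ ∨ wIncid x a₂ ∨ wIncid x a₃ ∨ wIncid x a₄},
        (IncGraph (wIncid (p := p) (n := n))).dist (Sum.inl C) (Sum.inl A) =
        (IncGraph (wIncid (p := p) (n := n))).dist (Sum.inl C') (Sum.inl A)) →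
      C = C' := by
  rw [← disjoint_iff] at h12 h13 h23
  have hdisj₄ : ∀ a : WLine p n, (∀ v ∈ a.1, Q v = 0) → Disjoint a.1 a₄.1 := fun a hQa =>
    disjoint_def.2 fun v hv hv₄ => by_contra fun hv0 => hQ4 v hv₄ hv0 (hQa v hv)
  refine ⟨ncard_setOf_wIncid_or hn h12 h13 (hdisj₄ _ hQ1) h23 (hdisj₄ _ hQ2) (hdisj₄ _ hQ3),
    fun C C' hdist => ?_⟩
  by_cases hC : wIncid C a₁ ∨ wIncid C a₂ ∨ wIncid C a₃ ∨ wIncid C a₄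
  · exact (Sum.inl_injective ((reachable_inl_inl C' C).dist_eq_zero_iff.1
      (by rw [← hdist C hC, SimpleGraph.dist_self]))).symm
  simp only [not_or] at hC
  by_contra hne
  obtain ⟨x₁, hx₁, hx₁0, hCx₁⟩ :=
    exists_symp_eq_zero_of_dist_eq hC.1 fun A hA => hdist A (.inl hA)
  obtain ⟨x₂, hx₂, hx₂0, hCx₂⟩ :=
    exists_symp_eq_zero_of_dist_eq hC.2.1 fun A hA => hdist A (.inr (.inl hA))
  obtain ⟨x₃, hx₃, hx₃0, hCx₃⟩ :=
    exists_symp_eq_zero_of_dist_eq hC.2.2.1 fun A hA => hdist A (.inr (.inr (.inl hA)))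
  obtain ⟨x₄, hx₄, hx₄0, hCx₄⟩ :=
    exists_symp_eq_zero_of_dist_eq hC.2.2.2 fun A hA => hdist A (.inr (.inr (.inr hA)))
  have hx₁₂ : LinearIndependent _ ![x₁, x₂] :=
    .pair_of_notMem hx₁ hx₁0 fun h => hx₂0 (disjoint_def.1 h12 _ h hx₂)
  obtain ⟨α, β, rfl⟩ := mem_span_pair.1 (mem_span_pair_of_symp_eq_zero hne hx₁₂ hCx₁ hCx₂ hCx₃)
  obtain ⟨hα, hβ⟩ := ne_zero_and_ne_zero_of_smul_add_smul_mem h13 h23 hx₁ hx₂ hx₃ hx₃0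
  obtain ⟨Q, rfl⟩ := exists_quadraticForm_eq_of_linearEquiv hQhyp
  exact hQ4 x₄ hx₄ hx₄0
    (Q.eq_zero_of_mem_span_pair hα hβ (hQ1 _ hx₁) (hQ2 _ hx₂) (hQ3 _ hx₃)
      (mem_span_pair_of_symp_eq_zero hne hx₁₂ hCx₁ hCx₂ hCx₄))
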